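/- arXiv:2011.09963 — 7 statements merged into one kernel-verified Lean document; each statement's English description precedes it below -/
import Mathlib

section
/- Let k ≥ 1 be an integer, let Ω ⊆ ℝ/ℤ be a (2,4)-sum-free set, and let a < b be real numbers such that for every x ∈ (a,b) the point kx mod 1 lies in Ω. Then the image of (a,b) under the quotient map ℝ → ℝ/ℤ is (2k,4k)-sum-free in ℝ/ℤ. -/
open Finset

theorem Convex.exists_card_nsmul_eq_sum {E : Type*} [AddCommGroup E] [Module ℝ E] {s : Set E}
    (hs : Convex ℝ s) {ι : Type*} [Fintype ι] [Nonempty ι] {u : ι → E} (hu : ∀ i, u i ∈ s) :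
    ∃ c ∈ s, Fintype.card ι • c = ∑ i, u i := by
  have hcard : (Fintype.card ι : ℝ) ≠ 0 := by exact_mod_cast Fintype.card_ne_zero
  refine ⟨(Fintype.card ι : ℝ)⁻¹ • ∑ i, u i, ?_, ?_⟩
  · rw [smul_sum]
    refine hs.sum_mem (fun _ _ => by positivity) ?_ (fun i _ => hu i)
    rw [sum_const, card_univ, nsmul_eq_mul, mul_inv_cancel₀ hcard]
  · rw [← Nat.cast_smul_eq_nsmul ℝ, smul_smul, mul_inv_cancel₀ hcard, one_smul]

theorem Fin.sum_univ_finProdFinEquiv {M : Type*} [AddCommMonoid M] {m n : ℕ}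
    (u : Fin (m * n) → M) :
    ∑ i : Fin m, ∑ j : Fin n, u (finProdFinEquiv (i, j)) = ∑ p, u p :=
  (Fintype.sum_prod_type (fun p => u (finProdFinEquiv p))).symm.trans
    (finProdFinEquiv.sum_comp u)

/-- Split the `m * k` summands into `m` blocks of `k`: by convexity each block sum is `k * c`
with `c ∈ s`. -/
theorem exists_sum_mem_eq_sum_of_mem_image {G : Type*} [AddCommGroup G] (f : ℝ →+ G)
    {s : Set ℝ} (hs : Convex ℝ s) {Ω : Set G} {k : ℕ} (hk : 1 ≤ k)
    (h : ∀ c ∈ s, f (k * c) ∈ Ω) {m : ℕ} {x : Fin (m * k) → G} (hx : ∀ p, x p ∈ f '' s) :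
    ∃ z : Fin m → G, (∀ i, z i ∈ Ω) ∧ ∑ i, z i = ∑ p, x p := by
  choose t ht hxt using hx
  have : Nonempty (Fin k) := Fin.pos_iff_nonempty.mp hk
  have hblock (i : Fin m) : ∃ c ∈ s, (k : ℝ) * c = ∑ j : Fin k, t (finProdFinEquiv (i, j)) := by
    simpa only [Fintype.card_fin, nsmul_eq_mul] using
      hs.exists_card_nsmul_eq_sum (fun j : Fin k => ht (finProdFinEquiv (i, j)))
  choose c hc hct using hblock
  refine ⟨fun i => f (k * c i), fun i => h _ (hc i), ?_⟩
  calc ∑ i, f (k * c i) = ∑ i : Fin m, ∑ j : Fin k, f (t (finProdFinEquiv (i, j))) := by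
        simp only [hct, map_sum]
    _ = ∑ p, x p := by simp only [Fin.sum_univ_finProdFinEquiv, hxt]

theorem stmt9_general (k : ℕ) (hk : 1 ≤ k) (Ω : Set (AddCircle (1 : ℝ)))
    (hΩ : ¬ ∃ (x : Fin 2 → AddCircle (1 : ℝ)) (y : Fin 4 → AddCircle (1 : ℝ)),
      (∀ i, x i ∈ Ω) ∧ (∀ j, y j ∈ Ω) ∧ ∑ i, x i = ∑ j, y j)
    (a b : ℝ)
    (h : ∀ x ∈ Set.Ioo a b, (((k : ℝ) * x : ℝ) : AddCircle (1 : ℝ)) ∈ Ω) :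
    ¬ ∃ (x : Fin (2 * k) → AddCircle (1 : ℝ)) (y : Fin (4 * k) → AddCircle (1 : ℝ)),
      (∀ i, x i ∈ (fun t : ℝ => (t : AddCircle (1 : ℝ))) '' Set.Ioo a b) ∧
      (∀ j, y j ∈ (fun t : ℝ => (t : AddCircle (1 : ℝ))) '' Set.Ioo a b) ∧
      ∑ i, x i = ∑ j, y j := by
  rintro ⟨x, y, hx, hy, hsum⟩
  let π : ℝ →+ AddCircle (1 : ℝ) := QuotientAddGroup.mk' (AddSubgroup.zmultiples 1)
  obtain ⟨z, hz, hzx⟩ := exists_sum_mem_eq_sum_of_mem_image π (convex_Ioo a b) hk h hx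
  obtain ⟨w, hw, hwy⟩ := exists_sum_mem_eq_sum_of_mem_image π (convex_Ioo a b) hk h hy
  exact hΩ ⟨z, w, hz, hw, by rw [hzx, hwy, hsum]⟩

/-- Let `k ≥ 1`, let `Ω ⊆ ℝ/ℤ` be `(2,4)`-sum-free, and let `a < b` be reals
such that for every `x ∈ (a,b)`, the point `kx mod 1` lies in `Ω`. Then the image of
`(a,b)` in `ℝ/ℤ` is `(2k,4k)`-sum-free. -/
theorem stmt9 (k : ℕ) (hk : 1 ≤ k) (Ω : Set (AddCircle (1 : ℝ)))
    (hΩ : ¬ ∃ (x : Fin 2 → AddCircle (1 : ℝ)) (y : Fin 4 → AddCircle (1 : ℝ)),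
      (∀ i, x i ∈ Ω) ∧ (∀ j, y j ∈ Ω) ∧ ∑ i, x i = ∑ j, y j)
    (a b : ℝ) (hab : a < b)
    (h : ∀ x ∈ Set.Ioo a b, (((k : ℝ) * x : ℝ) : AddCircle (1 : ℝ)) ∈ Ω) :
    ¬ ∃ (x : Fin (2 * k) → AddCircle (1 : ℝ)) (y : Fin (4 * k) → AddCircle (1 : ℝ)),
      (∀ i, x i ∈ (fun t : ℝ => (t : AddCircle (1 : ℝ))) '' Set.Ioo a b) ∧
      (∀ j, y j ∈ (fun t : ℝ => (t : AddCircle (1 : ℝ))) '' Set.Ioo a b) ∧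
      ∑ i, x i = ∑ j, y j :=
  stmt9_general k hk Ω hΩ a b h
end

section
/- Let Q ≥ 3 be a real number. Define γ(n) = 1 if n ≡ 1 (mod 4), γ(n) = −1 if n ≡ 3 (mod 4), and γ(n) = 0 if n is even. Then for every odd positive integer n, the sum Σ_{t | n, t squarefree, every prime factor of t ≤ Q} μ(t) · γ(n/t) · sin(πn/(6t)) equals: 1/2 if every prime factor of n is greater than Q; −3/2 if 3 divides n and every prime factor of n/3 is greater than Q; and 0 otherwise. (In particular it equals 1/2 for n = 1 and −3/2 for n = 3.) -/
/-!
For odd `m`, `χ₄(m) sin(πm/6) = 1/2 - (3/2)[3 ∣ m]`: both factors change sign under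
`m ↦ m + 6`, so it suffices to check `m = 1, 3, 5`. With `γ = χ₄`, the sum therefore splits as
`(1/2) Σ μ(t) - (3/2) Σ_{3 ∣ n/t} μ(t)` over the squarefree divisors `t` of `n` with all prime
factors `≤ Q`. These are exactly the divisors of the product `k` of the primes `≤ Q` dividing
`n`, so the first sum is `Σ_{t ∣ k} μ(t) = [k = 1]`; the second is the same sum for `n/3` when
`3 ∣ n`, and empty otherwise. Since `Q ≥ 3`, the two cases `k = 1` and `3 ∣ n` exclude each other.
-/

open scoped Classical
open ArithmeticFunction Finset Real ZMod
open scoped ArithmeticFunction.Moebius ArithmeticFunction.zeta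

namespace Nat

lemma squarefree_prod_primes {s : Finset ℕ} (hs : ∀ p ∈ s, p.Prime) :
    Squarefree (∏ p ∈ s, p) :=
  squarefree_prod_of_pairwise_isCoprime
    (fun p hp q hq hpq => coprime_iff_isRelPrime.mp <|
      (coprime_primes (hs p hp) (hs q hq)).mpr hpq)
    fun p hp => (hs p hp).squarefree

lemma divisors_filter_squarefree_primes (P : ℕ → Prop) {n : ℕ} (hn : n ≠ 0) :
    n.divisors.filter (fun t => Squarefree t ∧ ∀ p : ℕ, p.Prime → p ∣ t → P p) =
      (∏ p ∈ n.primeFactors.filter P, p).divisors := by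
  have hprime : ∀ p ∈ n.primeFactors.filter P, p.Prime :=
    fun p hp => prime_of_mem_primeFactors (mem_filter.1 hp).1
  have hsq := squarefree_prod_primes hprime
  have hkn : ∏ p ∈ n.primeFactors.filter P, p ∣ n :=
    (prod_dvd_prod_of_subset _ _ _ (filter_subset _ _)).trans n.prod_primeFactors_dvd
  ext t
  simp only [mem_filter, mem_divisors, hn, hsq.ne_zero, Ne, not_false_eq_true, and_true]
  constructor
  · rintro ⟨htn, htsq, htP⟩
    rw [← prod_primeFactors_of_squarefree htsq]
    refine prod_dvd_prod_of_subset _ _ _ fun p hp => ?_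
    obtain ⟨hp, hpt, -⟩ := mem_primeFactors.1 hp
    exact mem_filter.2 ⟨mem_primeFactors.2 ⟨hp, hpt.trans htn, hn⟩, htP p hp hpt⟩
  · intro htk
    refine ⟨htk.trans hkn, hsq.squarefree_of_dvd htk, fun p hp hpt => ?_⟩
    have hpk : p ∈ (∏ p ∈ n.primeFactors.filter P, p).primeFactors :=
      mem_primeFactors.2 ⟨hp, hpt.trans htk, hsq.ne_zero⟩
    rw [primeFactors_prod hprime] at hpk
    exact (mem_filter.1 hpk).2

theorem sum_moebius_divisors_filter_squarefree_primes {R : Type*} [Ring R] (P : ℕ → Prop)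
    {n : ℕ} (hn : n ≠ 0) :
    ∑ t ∈ n.divisors.filter (fun t => Squarefree t ∧ ∀ p : ℕ, p.Prime → p ∣ t → P p),
        (μ t : R) = if ∀ p : ℕ, p.Prime → p ∣ n → ¬ P p then 1 else 0 := by
  have hprime : ∀ p ∈ n.primeFactors.filter P, p.Prime :=
    fun p hp => prime_of_mem_primeFactors (mem_filter.1 hp).1
  have hk := (squarefree_prod_primes hprime).ne_zero
  have hone : ∏ p ∈ n.primeFactors.filter P, p = 1 ↔ ∀ p : ℕ, p.Prime → p ∣ n → ¬ P p := by
    rw [← primeFactors_eq_empty.trans (or_iff_right hk), primeFactors_prod hprime,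
      filter_eq_empty_iff]
    simp [mem_primeFactors_of_ne_zero hn]
  rw [divisors_filter_squarefree_primes P hn]
  calc _ = ((ζ : ArithmeticFunction R) * μ) (∏ p ∈ n.primeFactors.filter P, p) := by
        rw [coe_zeta_mul_apply]; simp only [intCoe_apply]
    _ = _ := by rw [coe_zeta_mul_coe_moebius, one_apply, if_congr hone rfl rfl]

lemma divisors_filter_dvd_div {n d : ℕ} (hn : n ≠ 0) (hd : d ∣ n) :
    n.divisors.filter (fun t => d ∣ n / t) = (n / d).divisors := by
  ext t
  simp only [mem_filter, mem_divisors, Nat.div_ne_zero_iff_of_dvd hd, Nat.dvd_div_iff_mul_dvd hd]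
  constructor
  · rintro ⟨⟨htn, -⟩, hdt⟩
    exact ⟨mul_comm t d ▸ (Nat.dvd_div_iff_mul_dvd htn).1 hdt, hn, ne_zero_of_dvd_ne_zero hn hd⟩
  · rintro ⟨hdtn, -⟩
    have htn := dvd_of_mul_left_dvd hdtn
    exact ⟨⟨htn, hn⟩, (Nat.dvd_div_iff_mul_dvd htn).2 (mul_comm d t ▸ hdtn)⟩

theorem sum_moebius_divisors_filter_squarefree_primes_filter_dvd_div {R : Type*} [Ring R]
    (P : ℕ → Prop) {n : ℕ} (hn : n ≠ 0) (d : ℕ) :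
    ∑ t ∈ n.divisors.filter (fun t => Squarefree t ∧ ∀ p : ℕ, p.Prime → p ∣ t → P p)
        with d ∣ n / t, (μ t : R) =
      if d ∣ n ∧ ∀ p : ℕ, p.Prime → p ∣ n / d → ¬ P p then 1 else 0 := by
  by_cases hd : d ∣ n
  · rw [filter_comm, divisors_filter_dvd_div hn hd,
      sum_moebius_divisors_filter_squarefree_primes P
        ((Nat.div_ne_zero_iff_of_dvd hd).2 ⟨hn, ne_zero_of_dvd_ne_zero hn hd⟩)]
    simp only [hd, true_and]
  · rw [filter_false_of_mem fun t ht hdt =>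
      hd (hdt.trans (Nat.div_dvd_of_dvd (Nat.dvd_of_mem_divisors (mem_filter.1 ht).1)))]
    simp [hd]

end Nat

lemma χ₄_nat_mul_sin_pi_mul_div_six {m : ℕ} (hm : Odd m) :
    (χ₄ m : ℝ) * sin (π * m / 6) = if 3 ∣ m then -1 else 1 / 2 := by
  induction m using Nat.strong_induction_on with
  | _ m ih =>
  obtain hm6 | ⟨k, rfl⟩ : m < 6 ∨ ∃ k, m = k + 6 :=
    (lt_or_ge m 6).imp_right fun h => ⟨m - 6, by omega⟩
  · obtain rfl | rfl | rfl : m = 1 ∨ m = 3 ∨ m = 5 := by obtain ⟨j, rfl⟩ := hm; omega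
    · rw [show π * (1 : ℕ) / 6 = π / 6 by push_cast; ring, sin_pi_div_six]
      norm_num [χ₄_nat_one_mod_four]
    · rw [show π * (3 : ℕ) / 6 = π / 2 by push_cast; ring, sin_pi_div_two]
      norm_num [χ₄_nat_three_mod_four]
    · rw [show π * (5 : ℕ) / 6 = π - π / 6 by push_cast; ring, sin_pi_sub, sin_pi_div_six]
      norm_num [χ₄_nat_one_mod_four]
  · have hk : Odd k := by simpa [parity_simps] using hm
    have hχ : (χ₄ (k + 6 : ℕ) : ℝ) = -χ₄ k := by
      rw [χ₄_eq_neg_one_pow (Nat.odd_iff.1 hm), χ₄_eq_neg_one_pow (Nat.odd_iff.1 hk),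
        show (k + 6) / 2 = k / 2 + 3 by omega]
      push_cast; ring
    have hsin : sin (π * (k + 6 : ℕ) / 6) = -sin (π * k / 6) := by
      rw [← sin_add_pi]; push_cast; ring_nf
    rw [hχ, hsin, neg_mul_neg, ih k (by omega) hk]
    simp only [Nat.dvd_add_self_right]

lemma χ₄_nat_div_mul_sin_pi_mul_div {n t : ℕ} (hn : Odd n) (ht : t ∣ n) :
    (χ₄ (n / t : ℕ) : ℝ) * sin (π * n / (6 * t)) = if 3 ∣ n / t then -1 else 1 / 2 := by
  have ht0 : (t : ℝ) ≠ 0 := Nat.cast_ne_zero.2 (ne_zero_of_dvd_ne_zero hn.pos.ne' ht)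
  rw [← χ₄_nat_mul_sin_pi_mul_div_six (hn.of_dvd_nat (Nat.div_dvd_of_dvd ht)), Nat.cast_div ht ht0]
  congr 2
  field_simp

/-- Let `Q ≥ 3`. With `γ(n) = 1` for `n ≡ 1 (mod 4)`, `γ(n) = −1` for
`n ≡ 3 (mod 4)`, `γ(n) = 0` for even `n`, for every odd positive `n`,
`Σ_{t ∣ n, t squarefree, all prime factors of t ≤ Q} μ(t) γ(n/t) sin(πn/(6t))` equals
`1/2` if all prime factors of `n` exceed `Q`; `−3/2` if `3 ∣ n` and all prime factors of
`n/3` exceed `Q`; and `0` otherwise. -/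
theorem stmt10 (Q : ℝ) (hQ : 3 ≤ Q) (n : ℕ) (hn : 0 < n) (hodd : Odd n)
    (γ : ℕ → ℝ)
    (hγ : ∀ m : ℕ, γ m = if m % 4 = 1 then 1 else if m % 4 = 3 then -1 else 0)
    (T : ℝ)
    (hT : T = ∑ t ∈ n.divisors.filter
        (fun t => Squarefree t ∧ ∀ p : ℕ, p.Prime → p ∣ t → (p : ℝ) ≤ Q),
      (ArithmeticFunction.moebius t : ℝ) * γ (n / t) * Real.sin (Real.pi * n / (6 * t))) :
    ((∀ p : ℕ, p.Prime → p ∣ n → Q < (p : ℝ)) → T = 1/2) ∧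
    ((3 ∣ n ∧ ∀ p : ℕ, p.Prime → p ∣ (n / 3) → Q < (p : ℝ)) → T = -(3/2)) ∧
    ((¬ (∀ p : ℕ, p.Prime → p ∣ n → Q < (p : ℝ)) ∧
      ¬ (3 ∣ n ∧ ∀ p : ℕ, p.Prime → p ∣ (n / 3) → Q < (p : ℝ))) → T = 0) := by
  have hγχ₄ : ∀ m, γ m = χ₄ m := fun m => by
    rw [hγ, χ₄_nat_eq_if_mod_four]
    split_ifs <;> first | omega | norm_num
  set S := n.divisors.filter fun t => Squarefree t ∧ ∀ p : ℕ, p.Prime → p ∣ t → (p : ℝ) ≤ Q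
  have hsplit : T = 1 / 2 * ∑ t ∈ S, (μ t : ℝ) - 3 / 2 * ∑ t ∈ S with 3 ∣ n / t, (μ t : ℝ) := by
    rw [hT, sum_filter (s := S), mul_sum, mul_sum, ← sum_sub_distrib]
    refine sum_congr rfl fun t ht => ?_
    rw [hγχ₄, mul_assoc,
      χ₄_nat_div_mul_sin_pi_mul_div hodd (Nat.dvd_of_mem_divisors (mem_filter.1 ht).1)]
    split_ifs <;> ring
  have hnot3 : (∀ p : ℕ, p.Prime → p ∣ n → Q < p) → ¬ 3 ∣ n := fun h h3 =>
    (h 3 Nat.prime_three h3).not_ge (mod_cast hQ)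
  rw [hsplit, Nat.sum_moebius_divisors_filter_squarefree_primes _ hn.ne',
    Nat.sum_moebius_divisors_filter_squarefree_primes_filter_dvd_div _ hn.ne']
  simp only [not_le]
  refine ⟨fun hA => ?_, fun hB => ?_, fun ⟨hA, hB⟩ => ?_⟩
  · rw [if_pos hA, if_neg fun hB => hnot3 hA hB.1]; ring
  · rw [if_neg fun hA => hnot3 hA hB.1, if_pos hB]; ring
  · rw [if_neg hA, if_neg hB]; ring
end

section
/- For every nonempty finite set A of positive integers, |{k ∈ ℤ_{≥0} : A ∩ [3^k, 3^{k+1}) ≠ ∅}| · |A △ (3·A)| ≥ |A|. In particular, if |A| = N and |A △ (3·A)| ≤ N^{1/2}, then A is (3,1/2)-lacunary. -/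
/-!
Call `k = ⌊log₃ a⌋` the scale of `a ∈ A`. Following the chain `a, 3a, 9a, …` until it first
leaves `A` gives an exit point `3^(j+1) a ∈ 3·A \ A`. Two elements of the same scale with the
same exit point coincide, since `⌊log₃ (3^(j+1) a)⌋ = j + 1 + k` recovers `j`. Hence
`a ↦ (scale, exit point)` injects `A` into `{scales} × (A △ 3·A)`, and the lacunary statement
follows from `N ≤ L · |A △ 3·A| ≤ L · √N`.
-/

open Finset
open scoped symmDiff

namespace Nat

theorem log_pow_mul {b : ℕ} (hb : 1 < b) (k : ℕ) {n : ℕ} (hn : n ≠ 0) :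
    log b (b ^ k * n) = k + log b n := by
  refine log_eq_of_pow_le_of_lt_pow ?_ ?_
  · rw [pow_add]
    exact Nat.mul_le_mul_left _ (pow_log_le_self b hn)
  · rw [add_assoc, pow_add]
    exact Nat.mul_lt_mul_of_pos_left (lt_pow_succ_log_self hb n) (by positivity)

theorem eq_of_pow_mul_eq_pow_mul_of_log_eq {b m n x y : ℕ} (hb : 1 < b) (hm : m ≠ 0)
    (hn : n ≠ 0) (hlog : log b m = log b n) (h : b ^ x * m = b ^ y * n) : m = n := by
  have hxy : x = y := by
    have := congrArg (log b) h
    rwa [log_pow_mul hb x hm, log_pow_mul hb y hn, hlog, Nat.add_right_cancel_iff] at this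
  subst hxy
  exact Nat.eq_of_mul_eq_mul_left (by positivity) h

theorem setOf_pow_le_lt_pow_succ_eq_image_log {b : ℕ} (hb : 1 < b) {A : Finset ℕ}
    (hA : ∀ n ∈ A, 0 < n) :
    {k : ℕ | ∃ n ∈ A, b ^ k ≤ n ∧ n < b ^ (k + 1)} = A.image (log b) := by
  ext k
  simp only [Set.mem_ofPred_eq, coe_image, Set.mem_image, mem_coe]
  refine exists_congr fun n => and_congr_right fun hn => ?_
  rw [log_eq_iff (Or.inr ⟨hb, (hA n hn).ne'⟩)]

end Nat

theorem exists_pow_mul_mem_and_pow_succ_mul_notMem {b a : ℕ} (hb : 1 < b) (ha : a ≠ 0)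
    {A : Finset ℕ} (haA : a ∈ A) : ∃ j, b ^ j * a ∈ A ∧ b ^ (j + 1) * a ∉ A := by
  classical
  have hescape : ∃ i, b ^ i * a ∉ A := by
    by_contra! hall
    refine A.finite_toSet.not_infinite (Set.infinite_of_injective_forall_mem ?_ hall)
    intro i i' h
    exact Nat.pow_right_injective hb (Nat.eq_of_mul_eq_mul_right (Nat.pos_of_ne_zero ha) h)
  obtain ⟨j, hj⟩ : ∃ j, Nat.find hescape = j + 1 :=
    Nat.exists_eq_add_one.mpr <| Nat.pos_of_ne_zero fun h0 => by
      simpa [h0, haA] using Nat.find_spec hescape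
  refine ⟨j, ?_, hj ▸ Nat.find_spec hescape⟩
  simpa using Nat.find_min hescape (hj ▸ j.lt_succ_self)

theorem card_le_card_image_log_mul_card_symmDiff {b : ℕ} (hb : 1 < b) (A : Finset ℕ)
    (hA : ∀ n ∈ A, 0 < n) :
    #A ≤ #(A.image (Nat.log b)) * #(A ∆ A.image (b * ·)) := by
  choose! j hj using fun a (ha : a ∈ A) =>
    exists_pow_mul_mem_and_pow_succ_mul_notMem hb (hA a ha).ne' ha
  rw [← card_product]
  refine card_le_card_of_injOn (fun a => (Nat.log b a, b ^ (j a + 1) * a)) ?_ ?_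
  · intro a ha
    have hexit : b ^ (j a + 1) * a ∈ A.image (b * ·) :=
      mem_image.mpr ⟨_, (hj a ha).1, by ring⟩
    exact mem_product.mpr
      ⟨mem_image_of_mem _ ha, mem_union_right _ (mem_sdiff.mpr ⟨hexit, (hj a ha).2⟩)⟩
  · intro a ha a' ha' h
    simp only [Prod.mk.injEq] at h
    exact Nat.eq_of_pow_mul_eq_pow_mul_of_log_eq hb (hA a ha).ne' (hA a' ha').ne' h.1 h.2

theorem Real.sqrt_le_of_le_mul_of_le_sqrt {N L S : ℝ} (hN : 0 < N) (hL : 0 ≤ L)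
    (h : N ≤ L * S) (hS : S ≤ √N) : √N ≤ L := by
  have : √N * √N ≤ L * √N := by
    rw [Real.mul_self_sqrt hN.le]
    exact h.trans (mul_le_mul_of_nonneg_left hS hL)
  exact le_of_mul_le_mul_right this (Real.sqrt_pos.mpr hN)

/-- For every nonempty finite set `A` of positive integers,
`|{k ≥ 0 : A ∩ [3^k, 3^{k+1}) ≠ ∅}| · |A △ (3·A)| ≥ |A|`. In particular, if `|A| = N`
and `|A △ (3·A)| ≤ N^{1/2}`, then `A` is `(3,1/2)`-lacunary. -/
theorem stmt11 (A : Finset ℕ) (hA : A.Nonempty) (hpos : ∀ n ∈ A, 0 < n) :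
    {k : ℕ | ∃ n ∈ A, 3 ^ k ≤ n ∧ n < 3 ^ (k + 1)}.ncard *
        ((A \ A.image (fun a => 3 * a)) ∪ (A.image (fun a => 3 * a) \ A)).card
      ≥ A.card ∧
    ((((A \ A.image (fun a => 3 * a)) ∪ (A.image (fun a => 3 * a) \ A)).card : ℝ)
        ≤ (A.card : ℝ) ^ ((1 : ℝ)/2) →
      (A.card : ℝ) ^ ((1 : ℝ)/2)
        ≤ ({k : ℕ | ∃ n ∈ A, 3 ^ k ≤ n ∧ n < 3 ^ (k + 1)}.ncard : ℝ)) := by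
  rw [Nat.setOf_pow_le_lt_pow_succ_eq_image_log (by norm_num) hpos, Set.ncard_coe_finset,
    ← Finset.symmDiff_def, ← Real.sqrt_eq_rpow]
  have hcount := card_le_card_image_log_mul_card_symmDiff (by norm_num : 1 < 3) A hpos
  exact ⟨hcount, Real.sqrt_le_of_le_mul_of_le_sqrt (by exact_mod_cast hA.card_pos)
    (Nat.cast_nonneg _) (by exact_mod_cast hcount)⟩
end

section
/- For every real p ∈ (1,∞) there exists a constant C_p > 0 such that for every nonempty finite set A of positive integers, ( ∫_0^1 | Σ_{n∈A} e(nx) |^p dx )^{1/p} ≥ C_p · |{k ∈ ℤ_{≥0} : A ∩ [3^k, 3^{k+1}) ≠ ∅}|^{1/2}. -/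
/-!
Write `F_X(x) = Σ_{n∈X} e(nx)` and let `m` be such that `2m` is at least the conjugate exponent
`p'` of `p`. Sorting the nonempty triadic blocks `[3^k, 3^{k+1})` met by `A` by `k mod (m + 1)` and
choosing one element of `A` in each block of the most populated class gives `S ⊆ A` with
`(m + 1)|S| ≥ #blocks` that is lacunary with ratio `m + 1`. For such `S` two `m`-tuples with equal
sums are rearrangements of each other, so `‖F_S‖_{2m}^{2m} ≤ (m|S|)^m`. Orthogonality and Hölder
then give `|S| = ∫ F_A · conj F_S ≤ ‖F_A‖_p ‖F_S‖_{p'} ≤ ‖F_A‖_p ‖F_S‖_{2m} ≤ ‖F_A‖_p √(m|S|)`.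
-/

open MeasureTheory Complex Finset Real ComplexConjugate

def IsLacunary (q : ℕ) (s : Set ℕ) : Prop := ∀ x ∈ s, ∀ y ∈ s, x < y → q * x ≤ y

namespace IsLacunary

variable {m : ℕ} {s : Set ℕ}

lemma multiset_sum_lt (hs : IsLacunary (m + 1) s) {v : Multiset ℕ} (hvs : ∀ x ∈ v, x ∈ s)
    (hv : Multiset.card v ≤ m) {M : ℕ} (hM : M ∈ s) (hM0 : 0 < M) (hlt : ∀ x ∈ v, x < M) :
    v.sum < M := by
  have hmul : (m + 1) * v.sum ≤ m * M :=
    calc (m + 1) * v.sum = (v.map ((m + 1) * ·)).sum := by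
          rw [Multiset.sum_map_mul_left, Multiset.map_id']
      _ ≤ Multiset.card v * M := by
          refine (Multiset.sum_le_card_nsmul _ M fun y hy => ?_).trans (by simp)
          obtain ⟨x, hx, rfl⟩ := Multiset.mem_map.mp hy
          exact hs x (hvs x hx) M hM (hlt x hx)
      _ ≤ m * M := Nat.mul_le_mul_right M hv
  nlinarith

/-- Induction on the largest element: it must be the same on both sides, since otherwise the
other side sums to less than it. -/
lemma multiset_eq_of_sum_eq (hs : IsLacunary (m + 1) s) :
    ∀ {u v : Multiset ℕ}, (∀ x ∈ u, x ∈ s) → (∀ x ∈ v, x ∈ s) →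
      Multiset.card u = Multiset.card v → Multiset.card u ≤ m → u.sum = v.sum → u = v := by
  intro u
  induction u using Multiset.strongInductionOn with
  | ih u ih =>
  intro v hus hvs hcard hm hsum
  rcases eq_or_ne u 0 with rfl | hu0
  · exact (Multiset.card_eq_zero.mp hcard.symm).symm
  have hv0 : v ≠ 0 := by rintro rfl; simp_all
  obtain ⟨a, ha, ha_max⟩ := Multiset.exists_max_image id hu0
  obtain ⟨b, hb, hb_max⟩ := Multiset.exists_max_image id hv0
  have hab : a = b := by
    by_contra hne
    rcases Nat.lt_or_gt_of_ne hne with h | h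
    · have := hs.multiset_sum_lt hus hm (hvs b hb) ((Nat.zero_le a).trans_lt h)
        fun x hx => (ha_max x hx).trans_lt h
      have := Multiset.le_sum_of_mem hb
      omega
    · have := hs.multiset_sum_lt hvs (hcard ▸ hm) (hus a ha) ((Nat.zero_le b).trans_lt h)
        fun x hx => (hb_max x hx).trans_lt h
      have := Multiset.le_sum_of_mem ha
      omega
  subst hab
  rw [← Multiset.cons_erase ha, ← Multiset.cons_erase hb] at hsum
  rw [← Multiset.cons_erase ha, ← Multiset.cons_erase hb,
    ih (u.erase a) (Multiset.erase_lt.mpr ha) (fun x hx => hus x (Multiset.mem_of_mem_erase hx))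
      (fun x hx => hvs x (Multiset.mem_of_mem_erase hx))
      (by rw [Multiset.card_erase_of_mem ha, Multiset.card_erase_of_mem hb, hcard])
      (Multiset.card_erase_le.trans hm) (by simpa using hsum)]

lemma exists_eq_of_sum_eq (hs : IsLacunary (m + 1) s) {a b : Fin m → ℕ} (ha : ∀ i, a i ∈ s)
    (hb : ∀ i, b i ∈ s) (hab : ∑ i, a i = ∑ i, b i) (j : Fin m) : ∃ i, a i = b j := by
  have hmap : univ.val.map a = univ.val.map b :=
    hs.multiset_eq_of_sum_eq (by simpa using ha) (by simpa using hb) (by simp) (by simp) hab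
  have hj : b j ∈ univ.val.map a := hmap ▸ Multiset.mem_map_of_mem b (mem_univ j)
  simpa using hj

end IsLacunary

def multiAddEnergy (s : Finset ℕ) (m : ℕ) : ℕ :=
  #{ab ∈ Fintype.piFinset (fun _ : Fin m => s) ×ˢ Fintype.piFinset (fun _ : Fin m => s) |
    ∑ i, ab.1 i = ∑ i, ab.2 i}

lemma multiAddEnergy_le_of_isLacunary {s : Finset ℕ} {m : ℕ} (hs : IsLacunary (m + 1) s) :
    multiAddEnergy s m ≤ (m * #s) ^ m := by
  classical
  have hfiber : ∀ a ∈ Fintype.piFinset (fun _ : Fin m => s),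
      #{ab ∈ Fintype.piFinset (fun _ : Fin m => s) ×ˢ Fintype.piFinset (fun _ : Fin m => s) |
        ∑ i, ab.1 i = ∑ i, ab.2 i ∧ ab.1 = a} ≤ m ^ m := by
    intro a _
    calc _ ≤ #(Fintype.piFinset fun _ : Fin m => univ.image a) := by
          refine card_le_card_of_injOn Prod.snd (fun ab hab => ?_) fun ab hab ab' hab' h => ?_
          · simp only [coe_filter, mem_product, Fintype.mem_piFinset, Set.mem_ofPred_eq] at hab
            obtain ⟨⟨ha, hb⟩, hsum, rfl⟩ := hab
            simpa using hs.exists_eq_of_sum_eq ha hb hsum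
          · simp only [coe_filter, Set.mem_ofPred_eq] at hab hab'
            exact Prod.ext (hab.2.2.trans hab'.2.2.symm) h
      _ ≤ m ^ m := by
          rw [Fintype.card_piFinset_const]
          exact Nat.pow_le_pow_left (card_image_le.trans_eq (by simp)) m
  calc multiAddEnergy s m ≤ m ^ m * #(Fintype.piFinset fun _ : Fin m => s) :=
        card_le_mul_card_image_of_maps_to (f := Prod.fst)
          (fun ab hab => (mem_product.mp (mem_filter.mp hab).1).1) _
          (by simpa [filter_filter] using hfiber)
    _ = (m * #s) ^ m := by rw [Fintype.card_piFinset_const, mul_pow]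

lemma pow_mul_lt_of_log_add_lt {b x y k : ℕ} (hb : 1 < b) (h : Nat.log b x + k < Nat.log b y) :
    b ^ k * x < y := by
  have hy : y ≠ 0 := by rintro rfl; simp at h
  calc b ^ k * x < b ^ k * b ^ (Nat.log b x + 1) :=
        Nat.mul_lt_mul_of_pos_left (Nat.lt_pow_succ_log_self hb x) (by positivity)
    _ = b ^ (Nat.log b x + k + 1) := by ring
    _ ≤ b ^ Nat.log b y := Nat.pow_le_pow_right (by omega) h
    _ ≤ y := Nat.pow_log_le_self b hy

lemma exists_isLacunary_subset {b : ℕ} (hb : 1 < b) (A : Finset ℕ) (m : ℕ) :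
    ∃ S ⊆ A, IsLacunary (m + 1) S ∧ #(A.image (Nat.log b)) ≤ (m + 1) * #S := by
  obtain ⟨S₀, hS₀A, hinj, himg⟩ := exists_subset_injOn_image_eq_of_surjOn (A : Set ℕ)
    (A.image (Nat.log b)) (by simpa using Set.surjOn_image (Nat.log b) (A : Set ℕ))
  obtain ⟨j, -, hj⟩ := exists_le_card_fiber_of_nsmul_le_card_of_maps_to
    (f := fun n => Nat.log b n % (m + 1)) (t := range (m + 1)) (s := S₀)
    (fun n _ => mem_range.mpr (Nat.mod_lt _ m.succ_pos)) (nonempty_range_iff.mpr m.succ_ne_zero)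
    (b := (#S₀ : ℚ) / (m + 1))
    (by rw [card_range, nsmul_eq_mul, Nat.cast_succ, mul_div_cancel₀ _ m.cast_add_one_ne_zero])
  refine ⟨{n ∈ S₀ | Nat.log b n % (m + 1) = j}, fun n hn => hS₀A (mem_filter.mp hn).1, ?_, ?_⟩
  · intro x hx y hy hxy
    simp only [coe_filter, Set.mem_ofPred_eq] at hx hy
    have hlog : Nat.log b x < Nat.log b y :=
      (Nat.log_mono_right hxy.le).lt_of_ne fun h => hxy.ne (hinj hx.1 hy.1 h)
    have hmod : Nat.log b x + (m + 1) ≤ Nat.log b y :=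
      Nat.ModEq.add_le_of_lt (hx.2.trans hy.2.symm) hlog
    exact (Nat.mul_le_mul_right x (Nat.lt_pow_self hb)).trans
      (pow_mul_lt_of_log_add_lt hb (by omega)).le
  · rw [← himg, card_image_of_injOn hinj, mul_comm]
    rw [div_le_iff₀ (by positivity)] at hj
    exact_mod_cast hj

lemma ncard_setOf_pow_le_lt_pow {b : ℕ} (hb : 1 < b) {A : Finset ℕ} (hA : ∀ n ∈ A, 0 < n) :
    {k : ℕ | ∃ n ∈ A, b ^ k ≤ n ∧ n < b ^ (k + 1)}.ncard = #(A.image (Nat.log b)) := by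
  rw [← Set.ncard_coe_finset]
  congr 1
  ext k
  simp only [Set.mem_ofPred_eq, coe_image, Set.mem_image, mem_coe]
  refine exists_congr fun n => and_congr_right fun hn => ?_
  rw [Nat.log_eq_iff (Or.inr ⟨hb, (hA n hn).ne'⟩)]

noncomputable def e (θ : ℝ) : ℂ := exp (2 * π * I * θ)

lemma continuous_e : Continuous e := by unfold e; fun_prop

lemma norm_e (θ : ℝ) : ‖e θ‖ = 1 := by
  rw [e, Complex.norm_exp]; simp

lemma e_add (a b : ℝ) : e (a + b) = e a * e b := by
  simp only [e, ← Complex.exp_add]; push_cast; ring_nf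

lemma e_sum {ι : Type*} (s : Finset ι) (θ : ι → ℝ) : e (∑ i ∈ s, θ i) = ∏ i ∈ s, e (θ i) := by
  simp only [e, ← Complex.exp_sum, ofReal_sum, Finset.mul_sum]

lemma conj_e (θ : ℝ) : conj (e θ) = e (-θ) := by
  simp only [e, ← Complex.exp_conj, map_mul, conj_I, conj_ofReal, map_ofNat]; push_cast; ring_nf

lemma integral_e_int_mul (n : ℤ) :
    ∫ x in Set.Ioc (0:ℝ) 1, e (n * x) = if n = 0 then 1 else 0 := by
  rw [← intervalIntegral.integral_of_le zero_le_one]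
  split_ifs with hn
  · simp [hn, e]
  · have hc : 2 * π * I * n ≠ 0 := by simp [Real.pi_ne_zero, hn]
    simp only [e, ofReal_mul, ofReal_intCast, ← mul_assoc]
    rw [integral_exp_mul_complex hc]
    have : exp (2 * π * I * n) = 1 := by
      rw [← Complex.exp_int_mul_two_pi_mul_I n]; ring_nf
    simp [this]

lemma integral_sum_e_mul_conj_sum_e {ι κ : Type*} (s : Finset ι) (t : Finset κ)
    (f : ι → ℤ) (g : κ → ℤ) :
    ∫ x in Set.Ioc (0:ℝ) 1, (∑ i ∈ s, e (f i * x)) * conj (∑ j ∈ t, e (g j * x)) =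
      #{ij ∈ s ×ˢ t | f ij.1 = g ij.2} := by
  have hexpand : ∀ x : ℝ, (∑ i ∈ s, e (f i * x)) * conj (∑ j ∈ t, e (g j * x)) =
      ∑ ij ∈ s ×ˢ t, e ((f ij.1 - g ij.2 : ℤ) * x) := by
    intro x
    rw [map_sum, sum_mul_sum, sum_product]
    refine sum_congr rfl fun i _ => sum_congr rfl fun j _ => ?_
    rw [conj_e, ← e_add]; push_cast; ring_nf
  simp_rw [hexpand]
  rw [integral_finsetSum _ fun ij _ => ?_]
  · simp only [integral_e_int_mul, sub_eq_zero, sum_boole]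
  · exact (continuous_e.comp (continuous_const_mul _)).integrableOn_Ioc

noncomputable def expSum (s : Finset ℕ) (x : ℝ) : ℂ := ∑ n ∈ s, e (n * x)

lemma expSum_eq (s : Finset ℕ) (x : ℝ) :
    expSum s x = ∑ n ∈ s, exp (2 * π * I * n * x) := by
  simp [expSum, e, mul_assoc]

lemma norm_expSum_le (s : Finset ℕ) (x : ℝ) : ‖expSum s x‖ ≤ #s :=
  (norm_sum_le _ _).trans_eq (by simp [norm_e])

lemma expSum_pow (s : Finset ℕ) (m : ℕ) (x : ℝ) :
    expSum s x ^ m = ∑ a ∈ Fintype.piFinset (fun _ : Fin m => s), e ((∑ i, a i : ℕ) * x) := by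
  rw [expSum, ← Fin.prod_const, prod_univ_sum]
  refine sum_congr rfl fun a _ => ?_
  rw [← e_sum]; push_cast; rw [sum_mul]

lemma integral_expSum_mul_conj {A S : Finset ℕ} (hSA : S ⊆ A) :
    ∫ x in Set.Ioc (0:ℝ) 1, expSum A x * conj (expSum S x) = #S := by
  have h := integral_sum_e_mul_conj_sum_e A S (fun n => (n : ℤ)) (fun n => (n : ℤ))
  simp only [Int.cast_natCast, Nat.cast_inj] at h
  simp only [expSum]
  rw [h]
  have hdiag : {ij ∈ A ×ˢ S | ij.1 = ij.2} = S.image fun n => (n, n) := by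
    ext ⟨a, b⟩
    simp only [mem_filter, mem_product, mem_image, Prod.mk.injEq]
    constructor
    · rintro ⟨⟨-, hb⟩, rfl⟩; exact ⟨a, hb, rfl, rfl⟩
    · rintro ⟨n, hn, rfl, rfl⟩; exact ⟨⟨hSA hn, hn⟩, rfl⟩
  rw [hdiag, card_image_of_injective _ fun a b h => (Prod.mk.inj h).1]

lemma integral_norm_expSum_pow (s : Finset ℕ) (m : ℕ) :
    ∫ x in Set.Ioc (0:ℝ) 1, ‖expSum s x‖ ^ (2 * m) = multiAddEnergy s m := by
  have h := integral_sum_e_mul_conj_sum_e (Fintype.piFinset fun _ : Fin m => s)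
    (Fintype.piFinset fun _ : Fin m => s) (fun a => ((∑ i, a i : ℕ) : ℤ))
    (fun a => ((∑ i, a i : ℕ) : ℤ))
  simp only [Int.cast_natCast, Nat.cast_inj, ← expSum_pow, mul_conj', norm_pow] at h
  simp_rw [multiAddEnergy, pow_mul']
  exact_mod_cast h

lemma integral_norm_rpow_rpow_le_of_exponent_le {α E : Type*} [MeasurableSpace α]
    [NormedAddCommGroup E] {μ : Measure α} [IsProbabilityMeasure μ] {f : α → E} {p q : ℝ}
    (hp : 0 < p) (hpq : p ≤ q) (hf : MemLp f (ENNReal.ofReal q) μ) :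
    (∫ x, ‖f x‖ ^ p ∂μ) ^ (1 / p) ≤ (∫ x, ‖f x‖ ^ q ∂μ) ^ (1 / q) := by
  have hq : 0 < q := hp.trans_le hpq
  have hle : ENNReal.ofReal p ≤ ENNReal.ofReal q := ENNReal.ofReal_le_ofReal hpq
  have key := eLpNorm_le_eLpNorm_of_exponent_le hle hf.aestronglyMeasurable (μ := μ)
  rw [(hf.mono_exponent hle).eLpNorm_eq_integral_rpow_norm (by simpa using hp)
      ENNReal.ofReal_ne_top,
    hf.eLpNorm_eq_integral_rpow_norm (by simpa using hq) ENNReal.ofReal_ne_top,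
    ENNReal.toReal_ofReal hp.le, ENNReal.toReal_ofReal hq.le] at key
  rw [one_div, one_div]
  exact (ENNReal.ofReal_le_ofReal_iff (by positivity)).mp key

instance : IsProbabilityMeasure (volume.restrict (Set.Ioc (0:ℝ) 1)) := ⟨by simp⟩

lemma memLp_expSum (s : Finset ℕ) (p : ENNReal) :
    MemLp (expSum s) p (volume.restrict (Set.Ioc (0:ℝ) 1)) :=
  MemLp.of_bound (continuous_finsetSum _ fun _ _ =>
      continuous_e.comp (continuous_const_mul _)).aestronglyMeasurable _
    (ae_of_all _ (norm_expSum_le s))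

lemma card_le_integral_mul_multiAddEnergy {A S : Finset ℕ} (hSA : S ⊆ A) {p : ℝ} (hp : 1 < p)
    {m : ℕ} (hm : p.conjExponent ≤ 2 * m) :
    (#S : ℝ) ≤ (∫ x in Set.Ioc (0:ℝ) 1, ‖expSum A x‖ ^ p) ^ (1 / p) *
      (multiAddEnergy S m : ℝ) ^ (1 / (2 * m : ℝ)) := by
  set q := p.conjExponent
  have hpq : p.HolderConjugate q := .conjExponent hp
  have hnorm : (#S : ℝ) ≤ ∫ x in Set.Ioc (0:ℝ) 1, ‖expSum A x‖ * ‖expSum S x‖ :=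
    calc (#S : ℝ) = ‖∫ x in Set.Ioc (0:ℝ) 1, expSum A x * conj (expSum S x)‖ := by
          rw [integral_expSum_mul_conj hSA]; simp
      _ ≤ _ := (norm_integral_le_integral_norm _).trans_eq (by simp)
  have hmono : (∫ x in Set.Ioc (0:ℝ) 1, ‖expSum S x‖ ^ q) ^ (1 / q) ≤
      (multiAddEnergy S m : ℝ) ^ (1 / (2 * m : ℝ)) := by
    have := integral_norm_rpow_rpow_le_of_exponent_le hpq.symm.pos hm (memLp_expSum S _)
    simpa [← integral_norm_expSum_pow, ← Real.rpow_natCast] using this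
  calc (#S : ℝ) ≤ _ := hnorm
    _ ≤ _ := integral_mul_norm_le_Lp_mul_Lq hpq (memLp_expSum A _) (memLp_expSum S _)
    _ ≤ _ := by gcongr

lemma sqrt_card_div_le_integral {A S : Finset ℕ} (hSA : S ⊆ A) {p : ℝ} (hp : 1 < p) {m : ℕ}
    (hm : p.conjExponent ≤ 2 * m) (hS : IsLacunary (m + 1) S) :
    √(#S / m) ≤ (∫ x in Set.Ioc (0:ℝ) 1, ‖expSum A x‖ ^ p) ^ (1 / p) := by
  set L := (∫ x in Set.Ioc (0:ℝ) 1, ‖expSum A x‖ ^ p) ^ (1 / p)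
  have hm0 : (0 : ℝ) < m := by
    have := (Real.HolderConjugate.conjExponent hp).symm.lt; linarith
  have henergy : (multiAddEnergy S m : ℝ) ^ (1 / (2 * m : ℝ)) ≤ √(m * #S) :=
    calc (multiAddEnergy S m : ℝ) ^ (1 / (2 * m : ℝ))
        ≤ ((m * #S : ℝ) ^ m) ^ (1 / (2 * m : ℝ)) := by
          gcongr; exact_mod_cast multiAddEnergy_le_of_isLacunary hS
      _ = √(m * #S) := by
          rw [Real.sqrt_eq_rpow, ← Real.rpow_natCast, ← Real.rpow_mul (by positivity)]
          congr 1; field_simp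
  have hkey : (#S : ℝ) ≤ L * √(m * #S) :=
    (card_le_integral_mul_multiAddEnergy hSA hp hm).trans (by gcongr)
  rcases (Nat.cast_nonneg #S : (0:ℝ) ≤ #S).eq_or_lt with hS0 | hS0
  · rw [← hS0]; simpa using (by positivity : 0 ≤ L)
  have hsqrt : 0 < √(#S : ℝ) := Real.sqrt_pos.mpr hS0
  rw [Real.sqrt_div' _ hm0.le, div_le_iff₀ (Real.sqrt_pos.mpr hm0)]
  refine le_of_mul_le_mul_right ?_ hsqrt
  calc √(#S : ℝ) * √(#S : ℝ) = #S := Real.mul_self_sqrt hS0.le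
    _ ≤ L * √(m * #S) := hkey
    _ = L * √m * √(#S : ℝ) := by rw [Real.sqrt_mul hm0.le, mul_assoc]

/-- For every `p ∈ (1,∞)` there is `C_p > 0` such that for every nonempty
finite set `A` of positive integers,
`(∫_0^1 |Σ_{n∈A} e(nx)|^p dx)^{1/p} ≥ C_p · |{k ≥ 0 : A ∩ [3^k, 3^{k+1}) ≠ ∅}|^{1/2}`. -/
theorem stmt12 :
    ∀ p : ℝ, 1 < p → ∃ C : ℝ, 0 < C ∧
      ∀ A : Finset ℕ, A.Nonempty → (∀ n ∈ A, 0 < n) →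
        (∫ x in (0:ℝ)..1,
            (‖∑ n ∈ A, Complex.exp (2 * Real.pi * Complex.I * n * x)‖) ^ p)
              ^ (1 / p)
          ≥ C * Real.sqrt ({k : ℕ | ∃ n ∈ A, 3 ^ k ≤ n ∧ n < 3 ^ (k + 1)}.ncard) := by
  intro p hp
  set m := ⌈p.conjExponent⌉₊
  have hq : 0 < p.conjExponent := (Real.HolderConjugate.conjExponent hp).symm.pos
  have hm : p.conjExponent ≤ 2 * m := by linarith [Nat.le_ceil p.conjExponent]
  have hm0 : (0 : ℝ) < m := Nat.cast_pos.mpr (Nat.ceil_pos.mpr hq)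
  refine ⟨1 / √(m * (m + 1)), by positivity, fun A _ hA => ?_⟩
  obtain ⟨S, hSA, hS, hcard⟩ := exists_isLacunary_subset (by norm_num : 1 < 3) A m
  rw [ncard_setOf_pow_le_lt_pow (by norm_num) hA, ge_iff_le,
    intervalIntegral.integral_of_le zero_le_one]
  simp_rw [← expSum_eq]
  refine le_trans ?_ (sqrt_card_div_le_integral hSA hp hm hS)
  rw [one_div_mul_eq_div, ← Real.sqrt_div' _ (by positivity)]
  refine Real.sqrt_le_sqrt ?_
  rw [div_le_div_iff₀ (by positivity) hm0]
  have : (#(A.image (Nat.log 3)) : ℝ) ≤ (m + 1) * #S := by exact_mod_cast hcard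
  nlinarith
end

section
/- Let Ω be a Lebesgue-measurable subset of ℝ/ℤ that is sum-free, i.e., there do not exist x, y, z ∈ Ω with x + y = z in ℝ/ℤ. Then the Haar (Lebesgue) measure of Ω is at most 1/3. -/
/-! By inner regularity it suffices to treat a compact sum-free `K`. Then `K + K` is compact and
disjoint from `K`, so some `δ`-neighbourhood of `K` misses `K + K`. For a prime `p > 2 / δ`, round
each point of the circle down to the grid `(1/p)ℤ/ℤ ≅ ℤ/pℤ`: the image `A` of `K` is sum-free in
`ℤ/pℤ` because rounding moves `x + y - z` by less than `2 / p`, and `K` is covered by `|A|` arcs of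
length `1 / p`. Cauchy–Davenport gives `|A| + (2|A| - 1) ≤ p`, hence `vol K ≤ (p + 1) / (3p)`, and
we let `p → ∞`. -/

open Set Metric MeasureTheory Filter Topology Pointwise
open scoped ENNReal

theorem ZMod.three_mul_card_le_of_disjoint_add {p : ℕ} (hp : p.Prime) {A : Finset (ZMod p)}
    (hA : Disjoint A (A + A)) : 3 * A.card ≤ p + 1 := by
  have := Fact.mk hp
  rcases A.eq_empty_or_nonempty with rfl | hne
  · simp
  have hCD := ZMod.cauchy_davenport hp hne hne
  have hunion : A.card + (A + A).card ≤ p := by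
    simpa [Finset.card_union_of_disjoint hA, ZMod.card] using Finset.card_le_univ (A ∪ (A + A))
  have := hne.card_pos
  omega

namespace UnitAddCircle

theorem norm_coe_le_abs (x : ℝ) : ‖(x : UnitAddCircle)‖ ≤ |x| :=
  QuotientAddGroup.norm_mk_le_norm

/-- Rounding down to the grid: `x ∈ [k/N, (k+1)/N)` is sent to `k mod N`. -/
noncomputable def floorZMod (N : ℕ) (x : UnitAddCircle) : ZMod N :=
  ((⌊(N : ℝ) * (AddCircle.equivIco 1 0 x : ℝ)⌋ : ℤ) : ZMod N)

variable {N : ℕ} [NeZero N]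

theorem exists_eq_toAddCircle_floorZMod_add (x : UnitAddCircle) :
    ∃ r : ℝ, 0 ≤ r ∧ r < (N : ℝ)⁻¹ ∧ x = ZMod.toAddCircle (floorZMod N x) + r := by
  have hN : (0 : ℝ) < N := Nat.cast_pos.2 (NeZero.pos N)
  set t : ℝ := ↑(AddCircle.equivIco 1 0 x)
  set k : ℤ := ⌊(N : ℝ) * t⌋
  refine ⟨t - k / N, ?_, ?_, ?_⟩
  · rw [sub_nonneg, div_le_iff₀ hN, mul_comm]
    exact Int.floor_le _
  · calc t - k / N = ((N : ℝ) * t - k) / N := by field_simp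
      _ < 1 / N := by gcongr; linarith [Int.lt_floor_add_one ((N : ℝ) * t)]
      _ = (N : ℝ)⁻¹ := one_div _
  · rw [floorZMod, ZMod.toAddCircle_intCast, ← AddCircle.coe_add, add_sub_cancel]
    exact ((AddCircle.equivIco 1 0).symm_apply_apply x).symm

theorem dist_add_lt_of_floorZMod_add_eq {x y z : UnitAddCircle}
    (h : floorZMod N x + floorZMod N y = floorZMod N z) : dist (x + y) z < 2 / N := by
  obtain ⟨r₁, hr₁, hr₁', hx⟩ := exists_eq_toAddCircle_floorZMod_add (N := N) x
  obtain ⟨r₂, hr₂, hr₂', hy⟩ := exists_eq_toAddCircle_floorZMod_add (N := N) y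
  obtain ⟨r₃, hr₃, hr₃', hz⟩ := exists_eq_toAddCircle_floorZMod_add (N := N) z
  have hxyz : x + y - z = ((r₁ + r₂ - r₃ : ℝ) : UnitAddCircle) := by
    rw [hx, hy, hz, ← h, map_add, AddCircle.coe_sub, AddCircle.coe_add]
    abel
  rw [dist_eq_norm, hxyz]
  refine (norm_coe_le_abs _).trans_lt ?_
  rw [abs_lt, div_eq_mul_inv]
  constructor <;> linarith

theorem volume_le_card_div_of_mapsTo_floorZMod {S : Set UnitAddCircle} {A : Finset (ZMod N)}
    (hSA : MapsTo (floorZMod N) S A) : volume S ≤ ENNReal.ofReal (A.card / N) := by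
  set ρ : ℝ := (2 * N : ℝ)⁻¹
  have hρ : 2 * ρ = (N : ℝ)⁻¹ := by simp only [ρ]; field_simp
  have hcover : S ⊆ ⋃ i ∈ A, closedBall (ZMod.toAddCircle i + (ρ : UnitAddCircle)) ρ := by
    intro x hx
    refine mem_biUnion (hSA hx) ?_
    obtain ⟨r, hr, hr', hxr⟩ := exists_eq_toAddCircle_floorZMod_add (N := N) x
    have hxc : x - (ZMod.toAddCircle (floorZMod N x) + (ρ : UnitAddCircle))
        = ((r - ρ : ℝ) : UnitAddCircle) := by
      nth_rw 1 [hxr]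
      rw [AddCircle.coe_sub]
      abel
    rw [mem_closedBall, dist_eq_norm, hxc]
    refine (norm_coe_le_abs _).trans (abs_le.2 ⟨?_, ?_⟩)
    all_goals linarith
  have hball (c : UnitAddCircle) : volume (closedBall c ρ) = ENNReal.ofReal (N : ℝ)⁻¹ := by
    rw [AddCircle.volume_closedBall, hρ, min_eq_right (inv_le_one_of_one_le₀ ?_)]
    exact_mod_cast NeZero.one_le
  calc volume S ≤ ∑ i ∈ A, volume (closedBall (ZMod.toAddCircle i + (ρ : UnitAddCircle)) ρ) :=
        (measure_mono hcover).trans (measure_biUnion_finset_le _ _)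
    _ = ENNReal.ofReal (A.card / N) := by
        rw [Finset.sum_congr rfl fun i _ => hball _, Finset.sum_const, nsmul_eq_mul,
          div_eq_mul_inv, ENNReal.ofReal_mul (Nat.cast_nonneg _), ENNReal.ofReal_natCast]

theorem disjoint_add_of_subset_image_floorZMod {K : Set UnitAddCircle} {δ : ℝ}
    (hK : Disjoint (thickening δ K) (K + K)) (hNδ : 2 / N ≤ δ) {A : Finset (ZMod N)}
    (hA : (A : Set (ZMod N)) ⊆ floorZMod N '' K) : Disjoint A (A + A) := by
  rw [Finset.disjoint_left]
  intro _ hc hab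
  obtain ⟨a, ha, b, hb, rfl⟩ := Finset.mem_add.1 hab
  obtain ⟨x, hx, rfl⟩ := hA ha
  obtain ⟨y, hy, rfl⟩ := hA hb
  obtain ⟨z, hz, hzxy⟩ := hA hc
  have hthick : x + y ∈ thickening δ K :=
    mem_thickening_iff.2 ⟨z, hz, (dist_add_lt_of_floorZMod_add_eq hzxy.symm).trans_le hNδ⟩
  exact hK.notMem_of_mem_left hthick (add_mem_add hx hy)

theorem volume_le_of_disjoint_thickening_add {K : Set UnitAddCircle} {δ : ℝ}
    (hK : Disjoint (thickening δ K) (K + K)) {p : ℕ} (hp : p.Prime) (hpδ : 2 / p ≤ δ) :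
    volume K ≤ ENNReal.ofReal ((1 + 1 / p) / 3) := by
  have := Fact.mk hp
  classical
  set A : Finset (ZMod p) := {i | i ∈ floorZMod p '' K}
  have hA : (A : Set (ZMod p)) = floorZMod p '' K := by ext; simp [A]
  have hcard := ZMod.three_mul_card_le_of_disjoint_add hp
    (disjoint_add_of_subset_image_floorZMod hK hpδ hA.le)
  refine (volume_le_card_div_of_mapsTo_floorZMod (hA ▸ mapsTo_image _ _)).trans
    (ENNReal.ofReal_le_ofReal ?_)
  have hp0 : (0 : ℝ) < p := Nat.cast_pos.2 hp.pos
  rw [div_le_iff₀ hp0]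
  have : (3 * A.card : ℝ) ≤ p + 1 := by exact_mod_cast hcard
  field_simp
  linarith

theorem volume_le_third_of_isCompact {K : Set UnitAddCircle} (hK : IsCompact K)
    (hsf : Disjoint K (K + K)) : volume K ≤ 1 / 3 := by
  obtain ⟨δ, hδ, hthick⟩ := hsf.exists_thickenings hK (hK.add hK).isClosed
  replace hthick := hthick.mono_right (self_subset_thickening hδ (K + K))
  have hbound (n : ℕ) (hn : 2 / δ ≤ n) : volume K ≤ ENNReal.ofReal ((1 + 1 / n) / 3) := by
    obtain ⟨p, hnp, hp⟩ := Nat.exists_infinite_primes n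
    have hn0 : (0 : ℝ) < n := (div_pos two_pos hδ).trans_le hn
    have hnp' : (n : ℝ) ≤ p := by exact_mod_cast hnp
    refine (volume_le_of_disjoint_thickening_add hthick hp ?_).trans (ENNReal.ofReal_le_ofReal ?_)
    · rw [div_le_iff₀ (hn0.trans_le hnp'), mul_comm, ← div_le_iff₀ hδ]
      exact hn.trans hnp'
    · gcongr
  have hlim : Tendsto (fun n : ℕ ↦ ENNReal.ofReal ((1 + 1 / n) / 3)) atTop (𝓝 (1 / 3)) := by
    have := ENNReal.tendsto_ofReal
      (((tendsto_one_div_atTop_nhds_zero_nat (𝕜 := ℝ)).const_add 1).div_const 3)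
    simpa using this
  exact ge_of_tendsto hlim (eventually_atTop.2 ⟨⌈2 / δ⌉₊, fun n hn ↦ hbound n (Nat.ceil_le.1 hn)⟩)

end UnitAddCircle

/-- A Lebesgue-measurable sum-free subset of `ℝ/ℤ` has Haar measure at
most `1/3`. -/
theorem stmt13 (Ω : Set (AddCircle (1 : ℝ))) (hmeas : MeasurableSet Ω)
    (hsf : ¬ ∃ x ∈ Ω, ∃ y ∈ Ω, ∃ z ∈ Ω, x + y = z) :
    MeasureTheory.volume Ω ≤ 1/3 := by
  rw [hmeas.measure_eq_iSup_isCompact]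
  refine iSup₂_le fun K hKΩ ↦ iSup_le fun hK ↦ UnitAddCircle.volume_le_third_of_isCompact hK ?_
  rw [Set.disjoint_left]
  rintro _ hz ⟨x, hx, y, hy, rfl⟩
  exact hsf ⟨x, hKΩ hx, y, hKΩ hy, _, hKΩ hz, rfl⟩
end

section
/- Every finite set A of N positive integers contains a sum-free subset S with |S| ≥ N/3, i.e., a subset S in which there are no a, b, c ∈ S (repetitions allowed) with a + b = c. -/
/-! Erdős's averaging argument. Take a prime `p > max A` with `3 ∤ p` and let `M ⊆ ZMod p`
be the middle third `p/3 < x < 2p/3`, which is sum-free with `|M| ≥ (p - 1)/3`. Since every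
`a ∈ A` is a unit mod `p`, each `a` lands in `M` under `x ↦ t x` for exactly `|M|` of the
`p - 1` dilations `t ≠ 0`, so some dilation sends at least `|A| |M| / (p - 1) ≥ |A| / 3`
elements of `A` into `M`; those elements form a sum-free set. -/

open Finset

namespace ZMod

variable {p : ℕ} [NeZero p]

def middleThird (p : ℕ) [NeZero p] : Finset (ZMod p) :=
  {x | p < 3 * x.val ∧ 3 * x.val < 2 * p}

theorem zero_notMem_middleThird : (0 : ZMod p) ∉ middleThird p := by
  simp [middleThird]

theorem add_notMem_middleThird {x y : ZMod p} (hx : x ∈ middleThird p)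
    (hy : y ∈ middleThird p) : x + y ∉ middleThird p := by
  simp only [middleThird, mem_filter, mem_univ, true_and] at hx hy ⊢
  rcases lt_or_ge (x.val + y.val) p with h | h
  · rw [val_add_of_lt h]; omega
  · have := val_add_val_of_le h; omega

theorem card_middleThird (hp : ¬ 3 ∣ p) : p - 1 ≤ 3 * #(middleThird p) := by
  have himage : (middleThird p).image val = Ioo (p / 3) (p - p / 3) := by
    ext n
    simp only [middleThird, mem_image, mem_filter, mem_univ, true_and, mem_Ioo]
    constructor
    · rintro ⟨x, hx, rfl⟩
      have := x.val_lt
      omega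
    · intro hn
      have hnp : n < p := by omega
      exact ⟨n, by rw [val_cast_of_lt hnp]; omega, val_cast_of_lt hnp⟩
  rw [← card_image_of_injective _ (val_injective p), himage, Nat.card_Ioo]
  omega

end ZMod

section Dilation

variable {F α : Type*} [Field F] [Fintype F] [DecidableEq F]

theorem card_filter_mul_mem {a : F} (ha : a ≠ 0) (M : Finset F) :
    #{t | t * a ∈ M} = #M := by
  have : ({t | t * a ∈ M} : Finset F) = M.map (Equiv.mulRight₀ a ha).symm.toEmbedding := by
    ext t
    simp [mem_map_equiv]
  rw [this, card_map]

theorem sum_card_filter_mul_mem (A : Finset α) (f : α → F) (hf : ∀ a ∈ A, f a ≠ 0)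
    (M : Finset F) : ∑ t, #{a ∈ A | t * f a ∈ M} = #A * #M := by
  simp only [card_filter]
  rw [sum_comm, ← smul_eq_mul, ← sum_const]
  refine sum_congr rfl fun a ha => ?_
  rw [← card_filter, card_filter_mul_mem (hf a ha)]

/-- Averaging over the `|F| - 1` nonzero dilations; `t = 0` contributes nothing as `0 ∉ M`. -/
theorem exists_card_filter_mul_mem_ge (A : Finset α) (f : α → F) (hf : ∀ a ∈ A, f a ≠ 0)
    {M : Finset F} (hM : 0 ∉ M) :
    ∃ t : F, #A * #M ≤ (Fintype.card F - 1) * #{a ∈ A | t * f a ∈ M} := by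
  have hsum : ∑ t ∈ univ.erase 0, #{a ∈ A | t * f a ∈ M} = #A * #M := by
    rw [← sum_card_filter_mul_mem A f hf M, ← add_sum_erase _ _ (mem_univ 0)]
    simp [hM]
  have hnonempty : (univ.erase (0 : F)).Nonempty := ⟨1, by simp⟩
  obtain ⟨t, -, ht⟩ := exists_le_of_sum_le hnonempty
    (f := fun _ => #A * #M) (g := fun t => (Fintype.card F - 1) * #{a ∈ A | t * f a ∈ M})
    (by rw [sum_const, ← mul_sum, hsum, card_erase_of_mem (mem_univ _), card_univ,
      smul_eq_mul])
  exact ⟨t, ht⟩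

end Dilation

/-- Every finite set `A` of `N` positive integers contains a sum-free
subset `S` with `|S| ≥ N/3`. -/
theorem stmt14 (A : Finset ℕ) (hpos : ∀ n ∈ A, 0 < n) :
    ∃ S ⊆ A, (¬ ∃ a ∈ S, ∃ b ∈ S, ∃ c ∈ S, a + b = c) ∧
      (S.card : ℝ) ≥ (A.card : ℝ) / 3 := by
  obtain ⟨p, hp, hprime⟩ := Nat.exists_infinite_primes (A.sup id + 4)
  have : Fact p.Prime := ⟨hprime⟩
  have hA : ∀ a ∈ A, (a : ZMod p) ≠ 0 := fun a ha h => by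
    have : a ≤ A.sup id := le_sup (f := id) ha
    have := Nat.le_of_dvd (hpos a ha) ((ZMod.natCast_eq_zero_iff a p).mp h)
    omega
  have hM := ZMod.card_middleThird (p := p) fun h =>
    absurd ((Nat.prime_dvd_prime_iff_eq Nat.prime_three hprime).mp h) (by omega)
  obtain ⟨t, ht⟩ := exists_card_filter_mul_mem_ge A _ hA ZMod.zero_notMem_middleThird
  rw [ZMod.card] at ht
  set S : Finset ℕ := {a ∈ A | t * a ∈ ZMod.middleThird p}
  refine ⟨S, filter_subset _ _, ?_, ?_⟩
  · rintro ⟨a, ha, b, hb, c, hc, rfl⟩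
    rw [mem_filter] at ha hb hc
    exact ZMod.add_notMem_middleThird ha.2 hb.2 (by simpa [mul_add] using hc.2)
  · have : #A ≤ 3 * #S := by
      refine le_of_mul_le_mul_left (a := p - 1) ?_ (by omega)
      nlinarith
    rw [ge_iff_le, div_le_iff₀ three_pos]
    exact_mod_cast (by omega : #A ≤ _ * 3)
end

section
/- Define χ(n) = 1 if n ≡ 1 (mod 3), χ(n) = −1 if n ≡ 2 (mod 3), and χ(n) = 0 if 3 divides n. Then for every real number x whose fractional part {x} is neither 1/3 nor 2/3, the series Σ_{n=1}^∞ χ(n) cos(2πnx)/n converges, and 1_{(1/3,2/3)}({x}) − 1/3 = −(√3/π) · Σ_{n=1}^∞ χ(n) cos(2πnx)/n. -/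
/-!
For `0 < θ < 2π` put `z = e^{iθ}`. The partial sums of `∑ zⁿ` are bounded, so `∑ zⁿ/n` converges
by Dirichlet's test, and Abel's limit theorem identifies its sum with `-log (1 - z)`. Since
`1 - e^{iθ} = 2 sin (θ/2) e^{i(θ - π)/2}`, taking imaginary parts gives the sawtooth series
`∑ sin (nθ)/n = (π - θ)/2`, i.e. `∑ sin (2πnt)/n = π (1/2 - {t})` for `t ∉ ℤ`.

As `sin (2πn/3) = (√3/2) χ(n)`, the sum-to-product formula gives
`√3 χ(n) cos (2πnx) = sin (2πn(x + 1/3)) + sin (2πn(1/3 - x))`, so the series equals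
`(π/√3) (1 - {x + 1/3} - {1/3 - x})`; the excluded values `{x} = 1/3, 2/3` are exactly those
where one of the two sawtooth series sits at a jump.
-/

open Filter Finset Topology Real

lemma norm_geom_sum_le_of_norm_eq_one {𝕜 : Type*} [NormedDivisionRing 𝕜] {z : 𝕜}
    (hz : ‖z‖ = 1) (hz1 : z ≠ 1) (n : ℕ) :
    ‖∑ i ∈ range n, z ^ i‖ ≤ 2 / ‖z - 1‖ := by
  rw [geom_sum_eq hz1, norm_div]
  refine div_le_div_of_nonneg_right ?_ (norm_nonneg _)
  calc ‖z ^ n - 1‖ ≤ ‖z ^ n‖ + ‖(1 : 𝕜)‖ := norm_sub_le _ _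
    _ = 2 := by rw [norm_pow, hz]; norm_num

namespace Complex

lemma cauchySeq_sum_range_pow_div {z : ℂ} (hz : ‖z‖ = 1) (hz1 : z ≠ 1) :
    CauchySeq fun N ↦ ∑ n ∈ range N, z ^ n / n := by
  have hbound (N : ℕ) : ‖∑ n ∈ range N, z ^ (n + 1)‖ ≤ 2 / ‖z - 1‖ := by
    simpa only [pow_succ', ← mul_sum, norm_mul, hz, one_mul]
      using norm_geom_sum_le_of_norm_eq_one hz hz1 N
  have hanti : Antitone fun n : ℕ ↦ 1 / ((n : ℝ) + 1) := fun m n hmn ↦ by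
    simp only
    gcongr
  have hdirichlet := hanti.cauchySeq_series_mul_of_tendsto_zero_of_bounded
    tendsto_one_div_add_atTop_nhds_zero_nat hbound
  rw [← cauchySeq_shift 1]
  convert hdirichlet using 2 with N
  rw [sum_range_succ']
  simp [div_eq_inv_mul]

open scoped ComplexOrder in
lemma one_sub_mem_slitPlane {z : ℂ} (hz : ‖z‖ = 1) (hz1 : z ≠ 1) : 1 - z ∈ slitPlane := by
  rw [mem_slitPlane_iff_not_le_zero, sub_nonpos, le_def]
  rintro ⟨hre, him⟩
  have := re_le_norm z
  exact hz1 (ext (by simp at hre ⊢; linarith) (by simp at him ⊢; exact him.symm))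

lemma tendsto_sum_range_pow_div {z : ℂ} (hz : ‖z‖ = 1) (hz1 : z ≠ 1) :
    Tendsto (fun N ↦ ∑ n ∈ range N, z ^ n / n) atTop (𝓝 (-log (1 - z))) := by
  obtain ⟨S, hS⟩ := cauchySeq_tendsto_of_complete (cauchySeq_sum_range_pow_div hz hz1)
  suffices S = -log (1 - z) from this ▸ hS
  have habel := tendsto_tsum_powerSeries_nhdsWithin_lt hS
  have hlog : Tendsto (fun w ↦ -log (1 - w * z)) ((𝓝[<] 1).map ofReal) (𝓝 (-log (1 - z))) := by
    have hcont : ContinuousAt (fun w ↦ -log (1 - w * z)) 1 :=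
      ((continuousAt_clog (by simpa using one_sub_mem_slitPlane hz hz1)).comp
        (by fun_prop)).neg
    refine (one_mul z ▸ hcont.tendsto).mono_left ?_
    exact (continuous_ofReal.tendsto' 1 1 ofReal_one).mono_left nhdsWithin_le_nhds
  refine tendsto_nhds_unique (habel.congr' ?_) hlog
  rw [EventuallyEq, eventually_map]
  filter_upwards [Ioo_mem_nhdsLT (show (-1 : ℝ) < 1 by norm_num)] with r hr
  have hrz : ‖(r : ℂ) * z‖ < 1 := by
    rw [norm_mul, hz, mul_one, norm_real, Real.norm_eq_abs]
    exact abs_lt.mpr hr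
  simp_rw [← (hasSum_taylorSeries_neg_log hrz).tsum_eq, mul_pow]
  congr 1 with n
  ring

lemma one_sub_exp_mul_I_eq (θ : ℝ) :
    1 - exp (θ * I) = ↑(2 * Real.sin (θ / 2)) *
      (cos ↑((θ - π) / 2) + sin ↑((θ - π) / 2) * I) := by
  push_cast
  rw [sub_div, cos_sub_pi_div_two, sin_sub_pi_div_two, exp_mul_I]
  conv_lhs => rw [← mul_div_cancel₀ (θ : ℂ) two_ne_zero, cos_two_mul, sin_two_mul]
  linear_combination -2 * sin_sq_add_cos_sq ((θ : ℂ) / 2)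

lemma arg_one_sub_exp_mul_I {θ : ℝ} (h0 : 0 < θ) (h2 : θ < 2 * π) :
    arg (1 - exp (θ * I)) = (θ - π) / 2 := by
  rw [one_sub_exp_mul_I_eq, arg_mul_cos_add_sin_mul_I]
  · exact mul_pos two_pos (Real.sin_pos_of_pos_of_lt_pi (by linarith) (by linarith))
  · constructor <;> linarith [pi_pos]

end Complex

open Complex in
lemma tendsto_sum_range_sin_mul_div {θ : ℝ} (h0 : 0 < θ) (h2 : θ < 2 * π) :
    Tendsto (fun N ↦ ∑ n ∈ range N, Real.sin (n * θ) / n) atTop (𝓝 ((π - θ) / 2)) := by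
  have hz1 : exp (θ * I) ≠ 1 := fun h ↦ by
    have hcos : Real.cos θ = 1 := by simpa using congrArg re h
    rw [Real.cos_eq_one_iff_of_lt_of_lt (by linarith [pi_pos]) h2] at hcos
    exact h0.ne' hcos
  have him := (continuous_im.tendsto _).comp
    (tendsto_sum_range_pow_div (norm_exp_ofReal_mul_I θ) hz1)
  rw [Function.comp_def, neg_im, log_im, arg_one_sub_exp_mul_I h0 h2] at him
  convert him using 2 with N
  · rw [im_sum]
    refine sum_congr rfl fun n _ ↦ ?_
    rw [← Complex.exp_nat_mul, ← mul_assoc, ← ofReal_natCast, ← ofReal_mul, div_ofReal_im,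
      exp_ofReal_mul_I_im]
  · ring

lemma tendsto_sum_Icc_sin_two_pi_mul_div {t : ℝ} (ht : Int.fract t ≠ 0) :
    Tendsto (fun N : ℕ ↦ ∑ n ∈ Icc 1 N, Real.sin (2 * π * n * t) / n) atTop
      (𝓝 (π * (1 / 2 - Int.fract t))) := by
  have hθ0 : 0 < 2 * π * Int.fract t := by
    have := (Int.fract_nonneg t).lt_of_ne' ht
    positivity
  have hθ2 : 2 * π * Int.fract t < 2 * π := by
    nlinarith [Int.fract_lt_one t, pi_pos]
  have hperiodic (n : ℕ) : Real.sin (2 * π * n * t) = Real.sin (n * (2 * π * Int.fract t)) := by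
    rw [← Int.self_sub_floor, ← Real.sin_sub_int_mul_two_pi _ (n * ⌊t⌋)]
    push_cast
    ring_nf
  have hshift (N : ℕ) : ∑ n ∈ range (N + 1), Real.sin (n * (2 * π * Int.fract t)) / n =
      ∑ n ∈ Icc 1 N, Real.sin (2 * π * n * t) / n := by
    rw [range_eq_Ico, sum_eq_sum_Ico_succ_bot N.succ_pos]
    simp [hperiodic, Ico_add_one_right_eq_Icc]
  convert ((tendsto_sum_range_sin_mul_div hθ0 hθ2).comp (tendsto_add_atTop_nat 1)).congr hshift
    using 2
  ring

section FractShift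

variable {R : Type*} [CommRing R] [LinearOrder R] [IsStrictOrderedRing R] [FloorRing R]

lemma Int.fract_add_eq_ite {a : R} (ha0 : 0 ≤ a) (ha1 : a < 1) (x : R) :
    Int.fract (x + a) = if Int.fract x < 1 - a then Int.fract x + a else Int.fract x + a - 1 := by
  have := Int.fract_nonneg x
  have := Int.fract_lt_one x
  rw [Int.fract_eq_iff]
  split_ifs with h
  · exact ⟨by linarith, by linarith, ⌊x⌋, by rw [← Int.self_sub_fract]; abel⟩
  · exact ⟨by linarith, by linarith, ⌊x⌋ + 1, by push_cast; rw [← Int.self_sub_fract]; abel⟩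

lemma Int.fract_sub_eq_ite {a : R} (ha0 : 0 ≤ a) (ha1 : a < 1) (x : R) :
    Int.fract (a - x) = if Int.fract x ≤ a then a - Int.fract x else a - Int.fract x + 1 := by
  have := Int.fract_nonneg x
  have := Int.fract_lt_one x
  rw [Int.fract_eq_iff]
  split_ifs with h
  · exact ⟨by linarith, by linarith, -⌊x⌋, by push_cast; rw [← Int.self_sub_fract]; abel⟩
  · exact ⟨by linarith, by linarith, -⌊x⌋ - 1, by push_cast; rw [← Int.self_sub_fract]; abel⟩

lemma Int.fract_add_ne_zero {a : R} (ha0 : 0 < a) (ha1 : a < 1) {x : R}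
    (hx : Int.fract x ≠ 1 - a) : Int.fract (x + a) ≠ 0 := by
  have := Int.fract_nonneg x
  rw [Int.fract_add_eq_ite ha0.le ha1]
  split_ifs with h
  · exact (add_pos_of_nonneg_of_pos this ha0).ne'
  · exact sub_ne_zero.mpr fun h' ↦ hx (by linear_combination h')

lemma Int.fract_sub_ne_zero {a : R} (ha0 : 0 ≤ a) (ha1 : a < 1) {x : R}
    (hx : Int.fract x ≠ a) : Int.fract (a - x) ≠ 0 := by
  have := Int.fract_lt_one x
  rw [Int.fract_sub_eq_ite ha0 ha1]
  split_ifs with h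
  · exact sub_ne_zero.mpr hx.symm
  · exact (by linarith : (0 : R) < a - Int.fract x + 1).ne'

end FractShift

lemma fract_add_third_add_fract_third_sub (x : ℝ) :
    Int.fract (x + 1 / 3) + Int.fract (1 / 3 - x) =
      (if 1 / 3 < Int.fract x ∧ Int.fract x < 2 / 3 then 1 else 0) + 2 / 3 := by
  rw [Int.fract_add_eq_ite (by norm_num) (by norm_num),
    Int.fract_sub_eq_ite (by norm_num) (by norm_num)]
  split_ifs <;> grind

def chi3 (n : ℕ) : ℝ := if n % 3 = 1 then 1 else if n % 3 = 2 then -1 else 0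

lemma sin_two_pi_mul_div_three (n : ℕ) : Real.sin (2 * π * n / 3) = √3 / 2 * chi3 n := by
  obtain ⟨q, r, hr, rfl⟩ : ∃ q r, r < 3 ∧ n = r + 3 * q :=
    ⟨n / 3, n % 3, Nat.mod_lt _ three_pos, (Nat.mod_add_div n 3).symm⟩
  have : 2 * π * ((r + 3 * q : ℕ) : ℝ) / 3 = 2 * π * r / 3 + q * (2 * π) := by
    push_cast; ring
  rw [this, Real.sin_add_nat_mul_two_pi, chi3, Nat.add_mul_mod_self_left, Nat.mod_eq_of_lt hr]
  interval_cases r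
  · simp
  · rw [show 2 * π * ((1 : ℕ) : ℝ) / 3 = π - π / 3 by push_cast; ring, Real.sin_pi_sub,
      Real.sin_pi_div_three]
    norm_num
  · rw [show 2 * π * ((2 : ℕ) : ℝ) / 3 = π / 3 + π by push_cast; ring, Real.sin_add_pi,
      Real.sin_pi_div_three]
    norm_num

lemma sin_add_third_add_sin_third_sub (n : ℕ) (x : ℝ) :
    Real.sin (2 * π * n * (x + 1 / 3)) + Real.sin (2 * π * n * (1 / 3 - x)) =
      √3 * chi3 n * Real.cos (2 * π * n * x) := by
  have hsum : Real.sin (2 * π * n * (x + 1 / 3)) + Real.sin (2 * π * n * (1 / 3 - x)) =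
      2 * Real.sin (2 * π * n / 3) * Real.cos (2 * π * n * x) := by
    rw [show 2 * π * n * (x + 1 / 3) = 2 * π * n / 3 + 2 * π * n * x by ring,
      show 2 * π * n * (1 / 3 - x) = 2 * π * n / 3 - 2 * π * n * x by ring,
      Real.sin_add, Real.sin_sub]
    ring
  rw [hsum, sin_two_pi_mul_div_three]
  ring

/-- With `χ(n) = 1` for `n ≡ 1 (mod 3)`, `χ(n) = −1` for `n ≡ 2 (mod 3)`,
`χ(n) = 0` for `3 ∣ n`: for every real `x` whose fractional part is neither `1/3` nor
`2/3`, the series `Σ_{n≥1} χ(n) cos(2πnx)/n` converges, and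
`1_{(1/3,2/3)}({x}) − 1/3 = −(√3/π) Σ_{n≥1} χ(n) cos(2πnx)/n`. -/
theorem stmt16 (x : ℝ) (h1 : Int.fract x ≠ 1/3) (h2 : Int.fract x ≠ 2/3) :
    ∃ L : ℝ,
      Filter.Tendsto (fun N : ℕ => ∑ n ∈ Finset.Icc 1 N,
          (if n % 3 = 1 then (1:ℝ) else if n % 3 = 2 then -1 else 0) *
            Real.cos (2 * Real.pi * n * x) / n)
        Filter.atTop (nhds L) ∧
      (if 1/3 < Int.fract x ∧ Int.fract x < 2/3 then (1:ℝ) else 0) - 1/3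
        = -(Real.sqrt 3 / Real.pi) * L := by
  have hplus : Int.fract (x + 1 / 3) ≠ 0 :=
    Int.fract_add_ne_zero (by norm_num) (by norm_num) (by norm_num [h2])
  have hminus : Int.fract (1 / 3 - x) ≠ 0 :=
    Int.fract_sub_ne_zero (by norm_num) (by norm_num) h1
  refine ⟨(√3)⁻¹ * (π * (1 / 2 - Int.fract (x + 1 / 3)) + π * (1 / 2 - Int.fract (1 / 3 - x))),
    ?_, ?_⟩
  · refine (((tendsto_sum_Icc_sin_two_pi_mul_div hplus).add
      (tendsto_sum_Icc_sin_two_pi_mul_div hminus)).const_mul (√3)⁻¹).congr fun N ↦ ?_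
    rw [← sum_add_distrib, mul_sum]
    refine sum_congr rfl fun n _ ↦ ?_
    rw [← add_div, sin_add_third_add_sin_third_sub, chi3]
    field_simp
  · rw [← sub_eq_of_eq_add (fract_add_third_add_fract_third_sub x)]
    field_simp
    ring
end
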